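/- If G = ⟨g⟩ is a finite cyclic group of order n acting on a finitely generated free ℤ-module M, then the Herbrand quotient is multiplicative: for a short exact sequence 0 → M' → M → M'' → 0 of G-modules with all Tate cohomology groups finite, |Ĥ^0(M)|·|Ĥ^1(M')|·|Ĥ^1(M'')| = |Ĥ^1(M)|·|Ĥ^0(M')|·|Ĥ^0(M'')|. -/

import Mathlib

/-!
For `a = 1 - σ` and `b = N` we have `a b = b a = 0` on `M`, and `Ĥ⁰ = ker a / im b`,
`Ĥ¹ = ker b / im a`. As in the snake lemma, a short exact sequence of such 2-periodic data
gives an exact hexagon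
`Ĥ⁰(M') → Ĥ⁰(M) → Ĥ⁰(M'') → Ĥ¹(M') → Ĥ¹(M) → Ĥ¹(M'') → Ĥ⁰(M')`,
and in an exact cycle of groups the orders of alternate terms have equal products.
-/

open Finset AddSubgroup

section TateDefs

variable {M : Type*} [AddCommGroup M]

/-- The norm element `1 + σ + ⋯ + σ^{n-1}` of a cyclic group of order `n` with
generator acting by `σ`. -/
def normMap (n : ℕ) (σ : AddMonoid.End M) : AddMonoid.End M := ∑ i ∈ range n, σ ^ i

/-- Tate cohomology `Ĥ⁰` of a cyclic group of order `n` with generator acting by `σ`: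
the fixed points `ker (1 - σ)` modulo the image of the norm map. -/
abbrev tateH0 (n : ℕ) (σ : AddMonoid.End M) : Type _ :=
  ((1 - σ : AddMonoid.End M) : M →+ M).ker ⧸
    (((normMap n σ : M →+ M).range).addSubgroupOf ((1 - σ : AddMonoid.End M) : M →+ M).ker)

/-- Tate cohomology `Ĥ¹` (= `Ĥ^{-1}`) of a cyclic group of order `n` with generator
acting by `σ`: the kernel of the norm map modulo the image of `1 - σ`. -/
abbrev tateH1 (n : ℕ) (σ : AddMonoid.End M) : Type _ :=
  ((normMap n σ : M →+ M)).ker ⧸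
    ((((1 - σ : AddMonoid.End M) : M →+ M).range).addSubgroupOf (normMap n σ : M →+ M).ker)

end TateDefs

open Function

/-- Both Tate groups of a cyclic group have this shape: `Ĥ⁰` with `(a, b) = (1 - σ, N)` and
`Ĥ¹` with `(a, b) = (N, 1 - σ)`. -/
abbrev KerModRange {M : Type*} [AddCommGroup M] (a b : AddMonoid.End M) : Type _ :=
  (a : M →+ M).ker ⧸ ((b : M →+ M).range.addSubgroupOf (a : M →+ M).ker)

namespace KerModRange

open QuotientAddGroup

variable {M₁ M₂ : Type*} [AddCommGroup M₁] [AddCommGroup M₂]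
  {a₁ b₁ : AddMonoid.End M₁} {a₂ b₂ : AddMonoid.End M₂}

lemma apply_coe_ker {a : AddMonoid.End M₁} (x : (a : M₁ →+ M₁).ker) : a x = 0 :=
  x.2

lemma map_mem_ker (g : M₁ →+ M₂) (ha : Semiconj g a₁ a₂) {x : M₁}
    (hx : x ∈ (a₁ : M₁ →+ M₁).ker) : g x ∈ (a₂ : M₂ →+ M₂).ker := by
  change a₂ (g x) = 0
  rw [← ha.eq, show a₁ x = 0 from hx, map_zero]

def map (g : M₁ →+ M₂) (ha : Semiconj g a₁ a₂) (hb : Semiconj g b₁ b₂) :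
    KerModRange a₁ b₁ →+ KerModRange a₂ b₂ :=
  QuotientAddGroup.map _ _ ((g.domRestrict _).codRestrict _ fun x => map_mem_ker g ha x.2)
    (by
      rintro x ⟨y, hy⟩
      exact ⟨g y, (hb.eq y).symm.trans (congrArg g hy)⟩)

@[simp]
lemma map_mk (g : M₁ →+ M₂) (ha : Semiconj g a₁ a₂) (hb : Semiconj g b₁ b₂)
    (x : (a₁ : M₁ →+ M₁).ker) :
    map g ha hb (mk x) = mk ⟨g x, map_mem_ker g ha x.2⟩ :=
  rfl

lemma mk_eq_zero_iff {a b : AddMonoid.End M₁} (x : (a : M₁ →+ M₁).ker) :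
    (mk x : KerModRange a b) = 0 ↔ ∃ y, b y = x := by
  rw [eq_zero_iff, AddSubgroup.mem_addSubgroupOf]
  rfl

lemma mk_eq_mk_iff {a b : AddMonoid.End M₁} (x y : (a : M₁ →+ M₁).ker) :
    (mk x : KerModRange a b) = mk y ↔ ∃ z, b z = y - x := by
  rw [eq_comm, ← sub_eq_zero, ← QuotientAddGroup.mk_sub, mk_eq_zero_iff]
  rfl

def mkOfComap (p : M₁ →+ M₂) (a₂ b₂ : AddMonoid.End M₂) :
    (a₂ : M₂ →+ M₂).ker.comap p →+ KerModRange a₂ b₂ :=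
  (mk' _).comp ((p.domRestrict _).codRestrict _ fun x => x.2)

lemma mkOfComap_apply (p : M₁ →+ M₂) (x : (a₂ : M₂ →+ M₂).ker.comap p) :
    mkOfComap p a₂ b₂ x = mk ⟨p x, x.2⟩ :=
  rfl

lemma map_mk_eq_mkOfComap (g : M₁ →+ M₂) (ha : Semiconj g a₁ a₂) (hb : Semiconj g b₁ b₂)
    (x : (a₁ : M₁ →+ M₁).ker) :
    map g ha hb (mk x) = mkOfComap g a₂ b₂ ⟨x, map_mem_ker g ha x.2⟩ :=
  rfl

lemma mkOfComap_surjective {p : M₁ →+ M₂} (hp : Surjective p) :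
    Surjective (mkOfComap p a₂ b₂) := by
  rintro ⟨x₂⟩
  obtain ⟨x₁, hx₁⟩ := hp x₂
  exact ⟨⟨x₁, show p x₁ ∈ _ from hx₁ ▸ x₂.2⟩, congrArg mk (Subtype.ext hx₁)⟩

end KerModRange

lemma AddMonoidHom.card_eq_card_range_mul_card_ker {A B : Type*} [AddGroup A] [AddGroup B]
    (φ : A →+ B) : Nat.card A = Nat.card φ.range * Nat.card φ.ker := by
  rw [AddSubgroup.card_eq_card_quotient_mul_card_addSubgroup φ.ker,
    Nat.card_congr (QuotientAddGroup.quotientKerEquivRange φ).toEquiv]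

/-- In an exact hexagon each `|Aᵢ|` is `|im φᵢ₋₁| · |im φᵢ|`, so both sides are the product of
all six images. -/
lemma card_mul_card_mul_card_eq_of_exact_hexagon {A₀ A₁ A₂ A₃ A₄ A₅ : Type*} [AddGroup A₀]
    [AddGroup A₁] [AddGroup A₂] [AddGroup A₃] [AddGroup A₄] [AddGroup A₅]
    (φ₀ : A₀ →+ A₁) (φ₁ : A₁ →+ A₂) (φ₂ : A₂ →+ A₃) (φ₃ : A₃ →+ A₄) (φ₄ : A₄ →+ A₅)
    (φ₅ : A₅ →+ A₀) (h₁ : φ₀.range = φ₁.ker) (h₂ : φ₁.range = φ₂.ker) (h₃ : φ₂.range = φ₃.ker)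
    (h₄ : φ₃.range = φ₄.ker) (h₅ : φ₄.range = φ₅.ker) (h₀ : φ₅.range = φ₀.ker) :
    Nat.card A₀ * Nat.card A₂ * Nat.card A₄ = Nat.card A₁ * Nat.card A₃ * Nat.card A₅ := by
  simp only [φ₀.card_eq_card_range_mul_card_ker, φ₁.card_eq_card_range_mul_card_ker,
    φ₂.card_eq_card_range_mul_card_ker, φ₃.card_eq_card_range_mul_card_ker,
    φ₄.card_eq_card_range_mul_card_ker, φ₅.card_eq_card_range_mul_card_ker,
    ← h₀, ← h₁, ← h₂, ← h₃, ← h₄, ← h₅]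
  ring

structure IsShortExactCompatible {M' M M'' : Type*} [AddCommGroup M'] [AddCommGroup M]
    [AddCommGroup M''] (f : M' →+ M) (p : M →+ M'') (a' b' : AddMonoid.End M')
    (a b : AddMonoid.End M) (a'' b'' : AddMonoid.End M'') : Prop where
  injective : Injective f
  surjective : Surjective p
  range_eq_ker : f.range = p.ker
  semiconj_fa : Semiconj f a' a
  semiconj_fb : Semiconj f b' b
  semiconj_pa : Semiconj p a a''
  semiconj_pb : Semiconj p b b''
  ab_eq_zero : a * b = 0
  ba_eq_zero : b * a = 0

namespace IsShortExactCompatible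

open KerModRange

variable {M' M M'' : Type*} [AddCommGroup M'] [AddCommGroup M] [AddCommGroup M'']
  {f : M' →+ M} {p : M →+ M''} {a' b' : AddMonoid.End M'} {a b : AddMonoid.End M}
  {a'' b'' : AddMonoid.End M''}

lemma swap (h : IsShortExactCompatible f p a' b' a b a'' b'') :
    IsShortExactCompatible f p b' a' b a b'' a'' :=
  ⟨h.injective, h.surjective, h.range_eq_ker, h.semiconj_fb, h.semiconj_fa, h.semiconj_pb,
    h.semiconj_pa, h.ba_eq_zero, h.ab_eq_zero⟩

variable (h : IsShortExactCompatible f p a' b' a b a'' b'')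
include h

lemma ab_apply_eq_zero (x : M) : a (b x) = 0 :=
  DFunLike.congr_fun h.ab_eq_zero x

lemma ba_apply_eq_zero (x : M) : b (a x) = 0 :=
  DFunLike.congr_fun h.ba_eq_zero x

lemma apply_mem_range_of_mem_comap {x : M} (hx : x ∈ (a'' : M'' →+ M'').ker.comap p) :
    a x ∈ f.range := by
  rw [h.range_eq_ker, AddMonoidHom.mem_ker, h.semiconj_pa.eq]
  exact hx

lemma mem_ker_of_apply_eq {x : M} {y : M'} (hy : f y = a x) : y ∈ (b' : M' →+ M').ker := by
  apply h.injective
  change f (b' y) = f 0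
  rw [h.semiconj_fb.eq, hy, h.ba_apply_eq_zero, map_zero]

/-- On lifts `x ∈ M` of elements of `ker a''`, the connecting map is `x ↦ [f⁻¹ (a x)]`. -/
noncomputable def connectingOfLift : (a'' : M'' →+ M'').ker.comap p →+ KerModRange b' a' :=
  (QuotientAddGroup.mk' _).comp
    (((AddMonoidHom.ofInjective h.injective).symm.toAddMonoidHom.comp
      (((a : M →+ M).domRestrict _).codRestrict _ fun x =>
        h.apply_mem_range_of_mem_comap x.2)).codRestrict _ fun _ =>
      h.mem_ker_of_apply_eq (AddMonoidHom.apply_ofInjective_symm h.injective _))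

lemma connectingOfLift_eq (x : (a'' : M'' →+ M'').ker.comap p) (y : (b' : M' →+ M').ker)
    (hy : f y = a x) : h.connectingOfLift x = QuotientAddGroup.mk y := by
  refine congrArg QuotientAddGroup.mk (Subtype.ext (h.injective ?_))
  rw [hy]
  exact AddMonoidHom.apply_ofInjective_symm h.injective _

lemma ker_mkOfComap_le : (mkOfComap p a'' b'').ker ≤ h.connectingOfLift.ker := by
  rintro x hx
  rw [AddMonoidHom.mem_ker, mkOfComap_apply] at hx
  obtain ⟨w'', hw''⟩ := (mk_eq_zero_iff _).1 hx
  obtain ⟨w, rfl⟩ := h.surjective w''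
  obtain ⟨z, hz⟩ : (x : M) - b w ∈ f.range := by
    rw [h.range_eq_ker, AddMonoidHom.mem_ker, map_sub, h.semiconj_pb.eq]
    exact sub_eq_zero.2 hw''.symm
  have hy : f (a' z) = a x := by
    rw [h.semiconj_fa.eq, hz, map_sub, h.ab_apply_eq_zero, sub_zero]
  rw [AddMonoidHom.mem_ker, h.connectingOfLift_eq x ⟨a' z, h.mem_ker_of_apply_eq hy⟩ hy,
    mk_eq_zero_iff]
  exact ⟨z, rfl⟩

noncomputable def connecting : KerModRange a'' b'' →+ KerModRange b' a' :=
  (mkOfComap p a'' b'').liftOfSurjective (mkOfComap_surjective h.surjective)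
    ⟨h.connectingOfLift, h.ker_mkOfComap_le⟩

lemma connecting_mkOfComap (x : (a'' : M'' →+ M'').ker.comap p) (y : (b' : M' →+ M').ker)
    (hy : f y = a x) : h.connecting (mkOfComap p a'' b'' x) = QuotientAddGroup.mk y :=
  (AddMonoidHom.liftOfRightInverse_comp_apply _ _ _ _ x).trans (h.connectingOfLift_eq x y hy)

lemma pf_apply_eq_zero (y : M') : p (f y) = 0 := by
  rw [← AddMonoidHom.mem_ker, ← h.range_eq_ker]
  exact ⟨y, rfl⟩

lemma range_map_eq_ker_map :
    (map f h.semiconj_fa h.semiconj_fb).range = (map p h.semiconj_pa h.semiconj_pb).ker := by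
  ext q
  obtain ⟨x, rfl⟩ := QuotientAddGroup.mk_surjective q
  rw [AddMonoidHom.mem_ker, map_mk, mk_eq_zero_iff, AddMonoidHom.mem_range]
  constructor
  · rintro ⟨q', hq'⟩
    obtain ⟨y, rfl⟩ := QuotientAddGroup.mk_surjective q'
    rw [map_mk, mk_eq_mk_iff] at hq'
    obtain ⟨w, hw⟩ := hq'
    refine ⟨p w, ?_⟩
    rw [← h.semiconj_pb.eq, hw]
    simp [h.pf_apply_eq_zero]
  · rintro ⟨w'', hw''⟩
    obtain ⟨w, rfl⟩ := h.surjective w''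
    obtain ⟨y, hy⟩ : (x : M) - b w ∈ f.range := by
      rw [h.range_eq_ker, AddMonoidHom.mem_ker, map_sub, h.semiconj_pb.eq]
      exact sub_eq_zero.2 hw''.symm
    have hy_ker : a' y = 0 := h.injective <| by
      rw [h.semiconj_fa.eq, hy, map_sub, apply_coe_ker, h.ab_apply_eq_zero,
        sub_zero, map_zero]
    refine ⟨QuotientAddGroup.mk ⟨y, hy_ker⟩, ?_⟩
    rw [map_mk, mk_eq_mk_iff]
    exact ⟨w, by simp [hy]⟩

lemma range_map_eq_ker_connecting :
    (map p h.semiconj_pa h.semiconj_pb).range = h.connecting.ker := by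
  ext q
  constructor
  · rintro ⟨q', rfl⟩
    obtain ⟨x, rfl⟩ := QuotientAddGroup.mk_surjective q'
    rw [AddMonoidHom.mem_ker, map_mk_eq_mkOfComap,
      h.connecting_mkOfComap _ 0 (by simp [apply_coe_ker])]
    rfl
  · intro hq
    obtain ⟨⟨x, hx⟩, rfl⟩ := mkOfComap_surjective h.surjective q
    obtain ⟨y, hy⟩ := h.apply_mem_range_of_mem_comap hx
    rw [AddMonoidHom.mem_ker, h.connecting_mkOfComap _ ⟨y, h.mem_ker_of_apply_eq hy⟩ hy,
      mk_eq_zero_iff] at hq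
    obtain ⟨z, hz⟩ := hq
    have hx_ker : a (x - f z) = 0 := by
      rw [map_sub, ← h.semiconj_fa.eq]
      simp [hz, hy]
    refine ⟨QuotientAddGroup.mk ⟨x - f z, hx_ker⟩, ?_⟩
    simp [mkOfComap_apply, h.pf_apply_eq_zero]

lemma range_connecting_eq_ker_map :
    h.connecting.range = (map f h.semiconj_fb h.semiconj_fa).ker := by
  ext q
  obtain ⟨y, rfl⟩ := QuotientAddGroup.mk_surjective q
  rw [AddMonoidHom.mem_ker, map_mk, mk_eq_zero_iff, AddMonoidHom.mem_range]
  constructor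
  · rintro ⟨q'', hq''⟩
    obtain ⟨⟨x, hx⟩, rfl⟩ := mkOfComap_surjective h.surjective q''
    obtain ⟨y₀, hy₀⟩ := h.apply_mem_range_of_mem_comap hx
    rw [h.connecting_mkOfComap _ ⟨y₀, h.mem_ker_of_apply_eq hy₀⟩ hy₀, mk_eq_mk_iff] at hq''
    obtain ⟨z, hz⟩ := hq''
    refine ⟨x + f z, ?_⟩
    rw [map_add, ← h.semiconj_fa.eq, hz]
    simp [hy₀]
  · rintro ⟨x, hx⟩
    have hx_comap : x ∈ (a'' : M'' →+ M'').ker.comap p := by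
      change a'' (p x) = 0
      rw [← h.semiconj_pa.eq, hx, h.pf_apply_eq_zero]
    exact ⟨mkOfComap p a'' b'' ⟨x, hx_comap⟩, h.connecting_mkOfComap _ y hx.symm⟩

lemma card_mul_card_mul_card_eq :
    Nat.card (KerModRange a' b') * Nat.card (KerModRange a'' b'') * Nat.card (KerModRange b a) =
      Nat.card (KerModRange a b) * Nat.card (KerModRange b' a') *
        Nat.card (KerModRange b'' a'') :=
  card_mul_card_mul_card_eq_of_exact_hexagon _ _ _ _ _ h.swap.connecting
    h.range_map_eq_ker_map h.range_map_eq_ker_connecting h.range_connecting_eq_ker_map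
    h.swap.range_map_eq_ker_map h.swap.range_map_eq_ker_connecting
    h.swap.range_connecting_eq_ker_map

end IsShortExactCompatible

section Tate

variable {M₁ M₂ : Type*} [AddCommGroup M₁] [AddCommGroup M₂] {g : M₁ →+ M₂}
  {σ₁ : AddMonoid.End M₁} {σ₂ : AddMonoid.End M₂}

lemma Function.Semiconj.one_sub (h : Semiconj g σ₁ σ₂) : Semiconj g ⇑(1 - σ₁) ⇑(1 - σ₂) :=
  fun x => show g (x - σ₁ x) = g x - σ₂ (g x) by rw [map_sub, h.eq]

lemma Function.Semiconj.normMap (h : Semiconj g σ₁ σ₂) (n : ℕ) :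
    Semiconj g ⇑(normMap n σ₁) ⇑(normMap n σ₂) := fun x => by
  rw [_root_.normMap, _root_.normMap]
  erw [AddMonoidHom.finsetSum_apply, AddMonoidHom.finsetSum_apply, map_sum]
  exact Finset.sum_congr rfl fun i _ => (h.iterate_right i).eq x

lemma one_sub_mul_normMap {n : ℕ} (hσ : σ₁ ^ n = 1) : (1 - σ₁) * normMap n σ₁ = 0 := by
  rw [normMap, mul_neg_geom_sum, hσ, sub_self]

lemma normMap_mul_one_sub {n : ℕ} (hσ : σ₁ ^ n = 1) : normMap n σ₁ * (1 - σ₁) = 0 := by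
  rw [normMap, geom_sum_mul_neg, hσ, sub_self]

end Tate

lemma isShortExactCompatible_one_sub_normMap {M' M M'' : Type*} [AddCommGroup M']
    [AddCommGroup M] [AddCommGroup M''] {f : M' →+ M} {p : M →+ M''} {σ' : AddMonoid.End M'}
    {σ : AddMonoid.End M} {σ'' : AddMonoid.End M''} {n : ℕ} (hσ : σ ^ n = 1)
    (hf : Injective f) (hp : Surjective p) (hexact : f.range = p.ker)
    (hfσ : Semiconj f σ' σ) (hpσ : Semiconj p σ σ'') :
    IsShortExactCompatible f p (1 - σ') (normMap n σ') (1 - σ) (normMap n σ)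
      (1 - σ'') (normMap n σ'') :=
  ⟨hf, hp, hexact, hfσ.one_sub, hfσ.normMap n, hpσ.one_sub, hpσ.normMap n,
    one_sub_mul_normMap hσ, normMap_mul_one_sub hσ⟩

theorem herbrand_quotient_multiplicative_general
    {M' M M'' : Type*} [AddCommGroup M'] [AddCommGroup M] [AddCommGroup M'']
    (n : ℕ)
    (σ' : AddMonoid.End M') (σ : AddMonoid.End M) (σ'' : AddMonoid.End M'')
    (hσ : σ ^ n = 1)
    (f : M' →+ M) (p : M →+ M'')
    (hf : Function.Injective f) (hp : Function.Surjective p)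
    (hexact : f.range = p.ker)
    (hfequiv : ∀ x, σ (f x) = f (σ' x)) (hpequiv : ∀ x, p (σ x) = σ'' (p x)) :
    Nat.card (tateH0 n σ) * Nat.card (tateH1 n σ') * Nat.card (tateH1 n σ'') =
      Nat.card (tateH1 n σ) * Nat.card (tateH0 n σ') * Nat.card (tateH0 n σ'') := by
  have h := isShortExactCompatible_one_sub_normMap hσ hf hp hexact
    (fun x => (hfequiv x).symm) hpequiv
  have hexagon := h.card_mul_card_mul_card_eq
  linarith

/-- Multiplicativity of the Herbrand quotient.  Let a cyclic group of order `n` with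
generator `g` act on a finitely generated free ℤ-module `M` (via `σ` with `σ ^ n = 1`),
and let `0 → M' → M → M'' → 0` be a short exact sequence of modules over this group.
If all six Tate cohomology groups are finite, then
`|Ĥ⁰(M)|·|Ĥ¹(M')|·|Ĥ¹(M'')| = |Ĥ¹(M)|·|Ĥ⁰(M')|·|Ĥ⁰(M'')|`. -/
theorem herbrand_quotient_multiplicative
    {M' M M'' : Type*} [AddCommGroup M'] [AddCommGroup M] [AddCommGroup M'']
    [Module ℤ M] [Module.Free ℤ M] [Module.Finite ℤ M]
    (n : ℕ) (hn : 0 < n)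
    (σ' : AddMonoid.End M') (σ : AddMonoid.End M) (σ'' : AddMonoid.End M'')
    (hσ' : σ' ^ n = 1) (hσ : σ ^ n = 1) (hσ'' : σ'' ^ n = 1)
    (f : M' →+ M) (p : M →+ M'')
    (hf : Function.Injective f) (hp : Function.Surjective p)
    (hexact : f.range = p.ker)
    (hfequiv : ∀ x, σ (f x) = f (σ' x)) (hpequiv : ∀ x, p (σ x) = σ'' (p x))
    (h0' : Finite (tateH0 n σ')) (h1' : Finite (tateH1 n σ'))
    (h0 : Finite (tateH0 n σ)) (h1 : Finite (tateH1 n σ))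
    (h0'' : Finite (tateH0 n σ'')) (h1'' : Finite (tateH1 n σ'')) :
    Nat.card (tateH0 n σ) * Nat.card (tateH1 n σ') * Nat.card (tateH1 n σ'') =
      Nat.card (tateH1 n σ) * Nat.card (tateH0 n σ') * Nat.card (tateH0 n σ'') :=
  herbrand_quotient_multiplicative_general n σ' σ σ'' hσ f p hf hp hexact hfequiv hpequiv
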